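/- For $d > 6$, there exists a constant $C = C(d) > 0$ such that for all $x, y \in \mathbb{Z}^d$, $\sum_{z_1, z_2 \in \mathbb{Z}^d} |x-z_1|^{2-d} |z_1-z_2|^{2-d} |z_2-x|^{2-d} |z_1-y|^{2-d} \leq C |x-y|^{2-d}$. -/

import Mathlib

/-- The ℓ∞ norm of a lattice point, as a real number. -/
noncomputable def normInf {d : ℕ} (x : Fin d → ℤ) : ℝ :=
  ((Finset.univ.sup fun i => (x i).natAbs : ℕ) : ℝ)

/-- `ipow x a = |x|^{-a}` with the convention `0^{-a} = 1`. -/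
noncomputable def ipow {d : ℕ} (x : Fin d → ℤ) (a : ℝ) : ℝ :=
  if x = 0 then 1 else normInf x ^ (-a)

/-!
Summing over `z₂` first, the convolution bound `∑_{z₂} |z₁-z₂|^{2-d} |z₂-x|^{2-d} ≲ |z₁-x|^{4-d}`
reduces the double sum to `∑_{z₁} |z₁-x|^{6-2d} |z₁-y|^{2-d}`, and since `2d - 6 > d` this is
`≲ |x-y|^{2-d}`. Both convolution bounds split `ℤ^d` into the points within `|x-y|/2` of `x`, those
within `|x-y|/2` of `y`, and those far from both; each part is estimated by counting the
`≲ n^{d-1}` lattice points on the `ℓ∞`-sphere of radius `n`. All bounds are proved for finite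
partial sums, which control the `tsum` of the nonnegative summand.
-/

open Finset

namespace LatticeConvolution

variable {d : ℕ}

/-- The `max 1` gives `decay a 0 = 1`, matching the convention `0^{-a} = 1` of `ipow`. -/
def bracket (w : Fin d → ℤ) : ℕ := max 1 (univ.sup fun i => (w i).natAbs)

noncomputable def decay (a : ℕ) (w : Fin d → ℤ) : ℝ := ((bracket w : ℝ) ^ a)⁻¹

lemma one_le_bracket (w : Fin d → ℤ) : 1 ≤ bracket w := le_max_left _ _

lemma natAbs_le_bracket (w : Fin d → ℤ) (i : Fin d) : (w i).natAbs ≤ bracket w :=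
  (le_sup (f := fun i => (w i).natAbs) (mem_univ i)).trans (le_max_right _ _)

lemma bracket_le_iff {w : Fin d → ℤ} {N : ℕ} (hN : 1 ≤ N) :
    bracket w ≤ N ↔ ∀ i, (w i).natAbs ≤ N :=
  ⟨fun h i => (natAbs_le_bracket w i).trans h,
    fun h => max_le hN (Finset.sup_le fun i _ => h i)⟩

lemma bracket_neg (w : Fin d → ℤ) : bracket (-w) = bracket w := by
  simp [bracket]

lemma bracket_sub_comm (v w : Fin d → ℤ) : bracket (v - w) = bracket (w - v) := by
  rw [← neg_sub, bracket_neg]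

lemma bracket_add_le (v w : Fin d → ℤ) : bracket (v + w) ≤ bracket v + bracket w :=
  (bracket_le_iff (le_add_right (one_le_bracket v))).2 fun i =>
    (Int.natAbs_add_le _ _).trans (add_le_add (natAbs_le_bracket v i) (natAbs_le_bracket w i))

lemma bracket_sub_le (x y z : Fin d → ℤ) :
    bracket (x - y) ≤ bracket (z - x) + bracket (z - y) :=
  calc bracket (x - y) = bracket (-(z - x) + (z - y)) := by congr 1; abel
    _ ≤ bracket (z - x) + bracket (z - y) := by
      simpa only [bracket_neg] using bracket_add_le (-(z - x)) (z - y)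

lemma decay_nonneg (a : ℕ) (w : Fin d → ℤ) : 0 ≤ decay a w := by
  unfold decay; positivity

lemma decay_mul_decay (a b : ℕ) (w : Fin d → ℤ) :
    decay a w * decay b w = decay (a + b) w := by
  simp only [decay, pow_add, mul_inv]

lemma decay_sub_comm (a : ℕ) (v w : Fin d → ℤ) : decay a (v - w) = decay a (w - v) := by
  rw [decay, decay, bracket_sub_comm]

lemma decay_anti_exponent {a b : ℕ} (h : a ≤ b) (w : Fin d → ℤ) : decay b w ≤ decay a w :=
  inv_pow_le_inv_pow_of_le (by exact_mod_cast one_le_bracket w) h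

lemma decay_mul_bracket_pow {b c : ℕ} (h : c ≤ b) (w : Fin d → ℤ) :
    decay b w * (bracket w : ℝ) ^ c = decay (b - c) w := by
  have : (bracket w : ℝ) ≠ 0 := by have := one_le_bracket w; positivity
  rw [decay, decay, pow_sub₀ _ this h, mul_inv, inv_inv, mul_comm]

lemma inv_pow_le_pow_mul_inv_pow {k r s : ℕ} (hr : 0 < r) (h : r ≤ k * s) (e : ℕ) :
    ((s : ℝ) ^ e)⁻¹ ≤ (k : ℝ) ^ e * ((r : ℝ) ^ e)⁻¹ := by
  obtain ⟨hk, hs⟩ := CanonicallyOrderedAdd.mul_pos.mp (hr.trans_le h)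
  calc ((s : ℝ) ^ e)⁻¹ = k ^ e * ((k * s : ℝ) ^ e)⁻¹ := by
        rw [mul_pow, mul_inv, ← mul_assoc, mul_inv_cancel₀ (by positivity), one_mul]
    _ ≤ k ^ e * ((r : ℝ) ^ e)⁻¹ := by gcongr; exact_mod_cast h

lemma decay_le_pow_mul_decay {a k : ℕ} {v w : Fin d → ℤ} (h : bracket v ≤ k * bracket w) :
    decay a w ≤ (k : ℝ) ^ a * decay a v :=
  inv_pow_le_pow_mul_inv_pow (one_le_bracket v) h a

lemma ipow_natCast (a : ℕ) (w : Fin d → ℤ) : ipow w a = decay a w := by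
  unfold ipow decay
  split_ifs with hw
  · simp [hw, bracket]
  · obtain ⟨i, hi⟩ : ∃ i, w i ≠ 0 := by simpa [funext_iff] using hw
    have : 1 ≤ univ.sup fun i => (w i).natAbs :=
      (Int.natAbs_pos.2 hi).trans_le (le_sup (f := fun i => (w i).natAbs) (mem_univ i))
    rw [normInf, bracket, max_eq_right this, Real.rpow_neg (by positivity), Real.rpow_natCast]

noncomputable def box (d N : ℕ) : Finset (Fin d → ℤ) :=
  Fintype.piFinset fun _ => Icc (-(N : ℤ)) N

lemma mem_box {N : ℕ} {w : Fin d → ℤ} : w ∈ box d N ↔ ∀ i, (w i).natAbs ≤ N := by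
  simp only [box, Fintype.mem_piFinset, mem_Icc, ← abs_le, Int.abs_eq_natAbs, Nat.cast_le]

lemma card_box (d N : ℕ) : #(box d N) = (2 * N + 1) ^ d := by
  simp only [box, Fintype.card_piFinset, Int.card_Icc, prod_const, card_univ, Fintype.card_fin]
  congr 1; omega

lemma bracket_le_iff_mem_box {w : Fin d → ℤ} {N : ℕ} (hN : 1 ≤ N) :
    bracket w ≤ N ↔ w ∈ box d N := by
  rw [bracket_le_iff hN, mem_box]

noncomputable def shell (d n : ℕ) : Finset (Fin d → ℤ) :=
  (box d n).filter fun w => bracket w = n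

lemma mem_shell {n : ℕ} {w : Fin d → ℤ} : w ∈ shell d n ↔ bracket w = n := by
  simp only [shell, mem_filter, and_iff_right_iff_imp]
  rintro rfl
  exact mem_box.2 (natAbs_le_bracket w)

lemma pow_sub_pow_le_of_le {a b : ℕ} (h : b ≤ a) (k : ℕ) :
    a ^ k - b ^ k ≤ (a - b) * k * a ^ (k - 1) := by
  have := abs_pow_sub_pow_le (a : ℤ) b k
  have hb : (0 : ℤ) ≤ b := by positivity
  rw [abs_of_nonneg (sub_nonneg.2 (pow_le_pow_left₀ hb (by exact_mod_cast h) k)),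
    abs_of_nonneg (sub_nonneg.2 (by exact_mod_cast h)), abs_of_nonneg hb,
    abs_of_nonneg (hb.trans (by exact_mod_cast h)), max_eq_left (by exact_mod_cast h)] at this
  zify [h, Nat.pow_le_pow_left h k]
  exact this

lemma card_shell_le (hd : 0 < d) (n : ℕ) : #(shell d n) ≤ d * 3 ^ d * n ^ (d - 1) := by
  have h3 : 3 ^ d = 3 * 3 ^ (d - 1) := by rw [← pow_succ']; congr; omega
  obtain rfl | rfl | hn := (by omega : n = 0 ∨ n = 1 ∨ 2 ≤ n)
  · have : shell d 0 = ∅ := eq_empty_of_forall_notMem fun w hw => by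
      have := one_le_bracket w; rw [mem_shell] at hw; omega
    simp [this]
  · calc #(shell d 1) ≤ #(box d 1) := card_filter_le _ _
      _ = 3 ^ d := card_box d 1
      _ ≤ d * 3 ^ d * 1 ^ (d - 1) := by
        rw [one_pow, mul_one]
        exact Nat.le_mul_of_pos_left _ hd
  · have hsub : shell d n ⊆ box d n \ box d (n - 1) := fun w hw => by
      rw [mem_shell] at hw
      rw [mem_sdiff, ← bracket_le_iff_mem_box (by omega), ← bracket_le_iff_mem_box (by omega)]
      omega
    have hbox : box d (n - 1) ⊆ box d n := fun w hw =>
      mem_box.2 fun i => (mem_box.1 hw i).trans (by omega)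
    calc #(shell d n) ≤ #(box d n \ box d (n - 1)) := card_le_card hsub
      _ = (2 * n + 1) ^ d - (2 * n - 1) ^ d := by
        rw [card_sdiff_of_subset hbox, card_box, card_box]; congr 2; omega
      _ ≤ (2 * n + 1 - (2 * n - 1)) * d * (2 * n + 1) ^ (d - 1) :=
        pow_sub_pow_le_of_le (by omega) d
      _ ≤ 2 * d * (3 * n) ^ (d - 1) := by
        rw [(by omega : 2 * n + 1 - (2 * n - 1) = 2)]; gcongr; omega
      _ ≤ d * 3 ^ d * n ^ (d - 1) := by
        rw [mul_pow, h3]; nlinarith [Nat.zero_le (d * 3 ^ (d - 1) * n ^ (d - 1))]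

lemma sum_comp_bracket_le (hd : 0 < d) {φ : ℕ → ℝ} (hφ : ∀ n, 0 ≤ φ n)
    {x : Fin d → ℤ} {t : Finset (Fin d → ℤ)} {I : Finset ℕ}
    (hI : ∀ z ∈ t, bracket (z - x) ∈ I) :
    ∑ z ∈ t, φ (bracket (z - x)) ≤ ∑ n ∈ I, d * 3 ^ d * (n : ℝ) ^ (d - 1) * φ n := by
  rw [sum_comp]
  refine (sum_le_sum fun n _ => ?_).trans <| sum_le_sum_of_subset_of_nonneg (image_subset_iff.2 hI)
    fun n _ _ => mul_nonneg (by positivity) (hφ n)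
  rw [nsmul_eq_mul]
  refine mul_le_mul_of_nonneg_right ?_ (hφ n)
  have hfiber : #{z ∈ t | bracket (z - x) = n} ≤ #(shell d n) :=
    card_le_card_of_injOn (· - x) (fun z hz => mem_shell.2 (mem_filter.1 hz).2)
      (fun _ _ _ _ h => sub_left_inj.1 h)
  exact_mod_cast hfiber.trans (card_shell_le hd n)

theorem exists_sum_decay_le_of_bracket_le {b : ℕ} (hb : b < d) :
    ∃ C > 0, ∀ (x : Fin d → ℤ) (R : ℕ) (t : Finset (Fin d → ℤ)),
      (∀ z ∈ t, bracket (z - x) ≤ R) →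
      ∑ z ∈ t, decay b (z - x) ≤ C * (R : ℝ) ^ (d - b) := by
  have hd : 0 < d := by omega
  have hd' : (0 : ℝ) < d := by exact_mod_cast hd
  refine ⟨d * 3 ^ d, by positivity, fun x R t ht => ?_⟩
  calc ∑ z ∈ t, decay b (z - x)
      ≤ ∑ n ∈ Icc 1 R, d * 3 ^ d * (n : ℝ) ^ (d - 1) * ((n : ℝ) ^ b)⁻¹ :=
        sum_comp_bracket_le (φ := fun n => ((n : ℝ) ^ b)⁻¹) hd (fun _ => by positivity)
          fun z hz => mem_Icc.2 ⟨one_le_bracket _, ht z hz⟩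
    _ ≤ ∑ n ∈ Icc 1 R, d * 3 ^ d * (R : ℝ) ^ (d - 1 - b) := by
        refine sum_le_sum fun n hn => ?_
        have hn1 : (1 : ℝ) ≤ n := by exact_mod_cast (mem_Icc.1 hn).1
        rw [mul_assoc, ← pow_sub₀ _ (by positivity) (by omega)]
        gcongr
        exact_mod_cast (mem_Icc.1 hn).2
    _ = d * 3 ^ d * (R : ℝ) ^ (d - b) := by
        rw [sum_const, Nat.card_Icc, nsmul_eq_mul, Nat.add_sub_cancel,
          (by omega : d - b = d - 1 - b + 1), pow_succ]
        ring

lemma sum_Icc_inv_pow_le {R N q : ℕ} (hR : 1 ≤ R) (hq : 2 ≤ q) :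
    ∑ n ∈ Icc R N, ((n : ℝ) ^ q)⁻¹ ≤ 2 * ((R : ℝ) ^ (q - 1))⁻¹ := by
  have hR' : (1 : ℝ) ≤ R := by exact_mod_cast hR
  have hsq : ∑ n ∈ Icc R N, ((n : ℝ) ^ 2)⁻¹ ≤ 2 / R :=
    calc ∑ n ∈ Icc R N, ((n : ℝ) ^ 2)⁻¹
        ≤ ∑ n ∈ Ioo (R - 1) (N + 1), ((n : ℝ) ^ 2)⁻¹ :=
          sum_le_sum_of_subset_of_nonneg
            (fun n hn => by simp only [mem_Icc, mem_Ioo] at hn ⊢; omega)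
            fun _ _ _ => by positivity
      _ ≤ 2 / (((R - 1 : ℕ) : ℝ) + 1) := sum_Ioo_inv_sq_le _ _
      _ = 2 / R := by rw [Nat.cast_sub hR, Nat.cast_one, sub_add_cancel]
  calc ∑ n ∈ Icc R N, ((n : ℝ) ^ q)⁻¹
      ≤ ∑ n ∈ Icc R N, ((R : ℝ) ^ (q - 2))⁻¹ * ((n : ℝ) ^ 2)⁻¹ := by
        gcongr with n hn
        have hRn : (R : ℝ) ≤ n := by exact_mod_cast (mem_Icc.1 hn).1
        have hn0 : (0 : ℝ) < n := by linarith
        rw [← mul_inv, ← pow_sub_mul_pow (n : ℝ) (by omega : 2 ≤ q)]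
        gcongr
    _ = ((R : ℝ) ^ (q - 2))⁻¹ * ∑ n ∈ Icc R N, ((n : ℝ) ^ 2)⁻¹ := (mul_sum ..).symm
    _ ≤ ((R : ℝ) ^ (q - 2))⁻¹ * (2 / R) := by gcongr
    _ = 2 * ((R : ℝ) ^ (q - 1))⁻¹ := by
        rw [(by omega : q - 1 = q - 2 + 1), pow_succ]
        field_simp

theorem exists_sum_decay_le_of_le_bracket (hd : 0 < d) {b : ℕ} (hb : d < b) :
    ∃ C > 0, ∀ (x : Fin d → ℤ) (R : ℕ) (t : Finset (Fin d → ℤ)), 1 ≤ R →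
      (∀ z ∈ t, R ≤ bracket (z - x)) →
      ∑ z ∈ t, decay b (z - x) ≤ C * ((R : ℝ) ^ (b - d))⁻¹ := by
  have hd' : (0 : ℝ) < d := by exact_mod_cast hd
  refine ⟨2 * (d * 3 ^ d), by positivity, fun x R t hR ht => ?_⟩
  set N := t.sup fun z => bracket (z - x)
  calc ∑ z ∈ t, decay b (z - x)
      ≤ ∑ n ∈ Icc R N, d * 3 ^ d * (n : ℝ) ^ (d - 1) * ((n : ℝ) ^ b)⁻¹ :=
        sum_comp_bracket_le (φ := fun n => ((n : ℝ) ^ b)⁻¹) hd (fun _ => by positivity)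
          fun z hz => mem_Icc.2 ⟨ht z hz, le_sup (f := fun z => bracket (z - x)) hz⟩
    _ = d * 3 ^ d * ∑ n ∈ Icc R N, ((n : ℝ) ^ (b - (d - 1)))⁻¹ := by
        rw [mul_sum]
        refine sum_congr rfl fun n hn => ?_
        have hn0 : (n : ℝ) ≠ 0 := by have : 1 ≤ n := hR.trans (mem_Icc.1 hn).1; positivity
        rw [← pow_sub_mul_pow (n : ℝ) (by omega : d - 1 ≤ b)]
        field_simp
    _ ≤ d * 3 ^ d * (2 * ((R : ℝ) ^ (b - (d - 1) - 1))⁻¹) := by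
        gcongr
        exact sum_Icc_inv_pow_le hR (by omega)
    _ = 2 * (d * 3 ^ d) * ((R : ℝ) ^ (b - d))⁻¹ := by
        rw [(by omega : b - (d - 1) - 1 = b - d)]
        ring

lemma sum_decay_mul_decay_le_of_near {a b : ℕ} {x y : Fin d → ℤ} {t : Finset (Fin d → ℤ)}
    (ht : ∀ z ∈ t, 2 * bracket (z - x) < bracket (x - y)) :
    ∑ z ∈ t, decay a (z - x) * decay b (z - y) ≤
      2 ^ b * decay b (x - y) * ∑ z ∈ t, decay a (z - x) := by
  rw [mul_sum]
  refine sum_le_sum fun z hz => ?_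
  rw [mul_comm (2 ^ b * _)]
  refine mul_le_mul_of_nonneg_left ?_ (decay_nonneg _ _)
  have := bracket_sub_le x y z
  have := ht z hz
  simpa using decay_le_pow_mul_decay (a := b) (k := 2) (v := x - y) (w := z - y) (by omega)

theorem exists_sum_near_left_le_of_lt {a b : ℕ} (ha : a < d) (hab : d ≤ a + b) :
    ∃ C > 0, ∀ (x y : Fin d → ℤ) (t : Finset (Fin d → ℤ)),
      (∀ z ∈ t, 2 * bracket (z - x) < bracket (x - y)) →
      ∑ z ∈ t, decay a (z - x) * decay b (z - y) ≤ C * decay (a + b - d) (x - y) := by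
  obtain ⟨C, hC, hsum⟩ := exists_sum_decay_le_of_bracket_le ha
  refine ⟨2 ^ b * C, by positivity, fun x y t ht => ?_⟩
  have h2b : 0 ≤ 2 ^ b * decay b (x - y) := mul_nonneg (by positivity) (decay_nonneg _ _)
  calc ∑ z ∈ t, decay a (z - x) * decay b (z - y)
      ≤ 2 ^ b * decay b (x - y) * ∑ z ∈ t, decay a (z - x) :=
        sum_decay_mul_decay_le_of_near ht
    _ ≤ 2 ^ b * decay b (x - y) * (C * (bracket (x - y) : ℝ) ^ (d - a)) :=
        mul_le_mul_of_nonneg_left (hsum x _ t fun z hz => by have := ht z hz; omega) h2b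
    _ = 2 ^ b * C * (decay b (x - y) * (bracket (x - y) : ℝ) ^ (d - a)) := by ring
    _ = 2 ^ b * C * decay (a + b - d) (x - y) := by
        rw [decay_mul_bracket_pow (by omega), (by omega : b - (d - a) = a + b - d)]

theorem exists_sum_near_left_le_of_gt (hd : 0 < d) {a b : ℕ} (ha : d < a) :
    ∃ C > 0, ∀ (x y : Fin d → ℤ) (t : Finset (Fin d → ℤ)),
      (∀ z ∈ t, 2 * bracket (z - x) < bracket (x - y)) →
      ∑ z ∈ t, decay a (z - x) * decay b (z - y) ≤ C * decay b (x - y) := by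
  obtain ⟨C, hC, hsum⟩ := exists_sum_decay_le_of_le_bracket hd ha
  refine ⟨2 ^ b * C, by positivity, fun x y t ht => ?_⟩
  have h2b : 0 ≤ 2 ^ b * decay b (x - y) := mul_nonneg (by positivity) (decay_nonneg _ _)
  calc ∑ z ∈ t, decay a (z - x) * decay b (z - y)
      ≤ 2 ^ b * decay b (x - y) * ∑ z ∈ t, decay a (z - x) :=
        sum_decay_mul_decay_le_of_near ht
    _ ≤ 2 ^ b * decay b (x - y) * C := by
        refine mul_le_mul_of_nonneg_left ?_ h2b
        simpa using hsum x 1 t le_rfl fun z _ => one_le_bracket _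
    _ = 2 ^ b * C * decay b (x - y) := by ring

theorem exists_sum_near_right_le_of_lt {a b : ℕ} (hb : b < d) (hab : d ≤ a + b) :
    ∃ C > 0, ∀ (x y : Fin d → ℤ) (t : Finset (Fin d → ℤ)),
      (∀ z ∈ t, 2 * bracket (z - y) < bracket (x - y)) →
      ∑ z ∈ t, decay a (z - x) * decay b (z - y) ≤ C * decay (a + b - d) (x - y) := by
  obtain ⟨C, hC, hsum⟩ := exists_sum_near_left_le_of_lt (b := a) hb (by omega)
  refine ⟨C, hC, fun x y t ht => ?_⟩
  have := hsum y x t fun z hz => bracket_sub_comm x y ▸ ht z hz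
  rwa [decay_sub_comm, add_comm, sum_congr rfl fun _ _ => mul_comm _ _] at this

/-- Far from both points `⟨z - x⟩ ≤ 3 ⟨z - y⟩`, so the summand is a tail term of `decay (a + b)`
around `x`. -/
theorem exists_sum_far_le (hd : 0 < d) {a b : ℕ} (hab : d < a + b) :
    ∃ C > 0, ∀ (x y : Fin d → ℤ) (t : Finset (Fin d → ℤ)),
      (∀ z ∈ t, bracket (x - y) ≤ 2 * min (bracket (z - x)) (bracket (z - y))) →
      ∑ z ∈ t, decay a (z - x) * decay b (z - y) ≤ C * decay (a + b - d) (x - y) := by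
  obtain ⟨C, hC, hsum⟩ := exists_sum_decay_le_of_le_bracket hd hab
  refine ⟨3 ^ b * (C * 2 ^ (a + b - d)), by positivity, fun x y t ht => ?_⟩
  have hr := one_le_bracket (x - y)
  calc ∑ z ∈ t, decay a (z - x) * decay b (z - y)
      ≤ ∑ z ∈ t, 3 ^ b * decay (a + b) (z - x) := by
        refine sum_le_sum fun z hz => ?_
        rw [← decay_mul_decay, mul_left_comm]
        refine mul_le_mul_of_nonneg_left ?_ (decay_nonneg _ _)
        have := bracket_sub_le z x y
        rw [bracket_sub_comm y z, bracket_sub_comm y x] at this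
        have := ht z hz
        simpa using decay_le_pow_mul_decay (a := b) (k := 3) (v := z - x) (w := z - y) (by omega)
    _ = 3 ^ b * ∑ z ∈ t, decay (a + b) (z - x) := (mul_sum ..).symm
    _ ≤ 3 ^ b * (C * ((((bracket (x - y) + 1) / 2 : ℕ) : ℝ) ^ (a + b - d))⁻¹) := by
        gcongr
        exact hsum x _ t (by omega) fun z hz => by have := ht z hz; omega
    _ ≤ 3 ^ b * (C * (2 ^ (a + b - d) * decay (a + b - d) (x - y))) := by
        gcongr
        simpa [decay] using inv_pow_le_pow_mul_inv_pow (k := 2) hr (by omega) (a + b - d)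
    _ = 3 ^ b * (C * 2 ^ (a + b - d)) * decay (a + b - d) (x - y) := by ring

lemma sum_le_of_near_left_near_right_far {f : (Fin d → ℤ) → ℝ} {x y : Fin d → ℤ}
    {B₁ B₂ B₃ : ℝ}
    (near_left : ∀ s : Finset (Fin d → ℤ),
      (∀ z ∈ s, 2 * bracket (z - x) < bracket (x - y)) → ∑ z ∈ s, f z ≤ B₁)
    (near_right : ∀ s : Finset (Fin d → ℤ),
      (∀ z ∈ s, 2 * bracket (z - y) < bracket (x - y)) → ∑ z ∈ s, f z ≤ B₂)
    (far : ∀ s : Finset (Fin d → ℤ),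
      (∀ z ∈ s, bracket (x - y) ≤ 2 * min (bracket (z - x)) (bracket (z - y))) →
      ∑ z ∈ s, f z ≤ B₃)
    (t : Finset (Fin d → ℤ)) : ∑ z ∈ t, f z ≤ B₁ + B₂ + B₃ := by
  set r := bracket (x - y)
  have hsplit₁ := sum_filter_add_sum_filter_not t (fun z => 2 * bracket (z - x) < r) f
  have hsplit₂ := sum_filter_add_sum_filter_not {z ∈ t | ¬2 * bracket (z - x) < r}
    (fun z => 2 * bracket (z - y) < r) f
  have h₁ := near_left {z ∈ t | 2 * bracket (z - x) < r} fun z hz => (mem_filter.1 hz).2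
  have h₂ := near_right {z ∈ {z ∈ t | ¬2 * bracket (z - x) < r} | 2 * bracket (z - y) < r}
    fun z hz => (mem_filter.1 hz).2
  have h₃ := far {z ∈ {z ∈ t | ¬2 * bracket (z - x) < r} | ¬2 * bracket (z - y) < r}
    fun z hz => by simp only [mem_filter] at hz; omega
  linarith

theorem exists_sum_decay_mul_decay_le_of_lt {a b : ℕ} (ha : a < d) (hb : b < d)
    (hab : d < a + b) :
    ∃ C > 0, ∀ (x y : Fin d → ℤ) (t : Finset (Fin d → ℤ)),
      ∑ z ∈ t, decay a (z - x) * decay b (z - y) ≤ C * decay (a + b - d) (x - y) := by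
  obtain ⟨C₁, hC₁, near_left⟩ := exists_sum_near_left_le_of_lt ha hab.le
  obtain ⟨C₂, hC₂, near_right⟩ := exists_sum_near_right_le_of_lt hb hab.le
  obtain ⟨C₃, hC₃, far⟩ := exists_sum_far_le (by omega) hab
  refine ⟨C₁ + C₂ + C₃, by positivity, fun x y t => ?_⟩
  rw [add_mul, add_mul]
  exact sum_le_of_near_left_near_right_far (near_left x y) (near_right x y) (far x y) t

theorem exists_sum_decay_mul_decay_le_of_gt {a b : ℕ} (ha : d < a) (hb : b < d) :
    ∃ C > 0, ∀ (x y : Fin d → ℤ) (t : Finset (Fin d → ℤ)),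
      ∑ z ∈ t, decay a (z - x) * decay b (z - y) ≤ C * decay b (x - y) := by
  obtain ⟨C₁, hC₁, near_left⟩ := exists_sum_near_left_le_of_gt (b := b) (by omega) ha
  obtain ⟨C₂, hC₂, near_right⟩ := exists_sum_near_right_le_of_lt (a := a) hb (by omega)
  obtain ⟨C₃, hC₃, far⟩ := exists_sum_far_le (d := d) (a := a) (b := b) (by omega)
    (by omega)
  refine ⟨C₁ + C₂ + C₃, by positivity, fun x y t => ?_⟩
  have hdecay : decay (a + b - d) (x - y) ≤ decay b (x - y) := decay_anti_exponent (by omega) _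
  rw [add_mul, add_mul]
  refine sum_le_of_near_left_near_right_far (near_left x y)
    (fun s hs => (near_right x y s hs).trans ?_) (fun s hs => (far x y s hs).trans ?_) t <;> gcongr

theorem exists_double_sum_le (hd : 6 < d) :
    ∃ C > 0, ∀ (x y : Fin d → ℤ) (s₁ s₂ : Finset (Fin d → ℤ)),
      ∑ z₁ ∈ s₁, ∑ z₂ ∈ s₂, decay (d - 2) (x - z₁) * decay (d - 2) (z₁ - z₂) *
        decay (d - 2) (z₂ - x) * decay (d - 2) (z₁ - y) ≤ C * decay (d - 2) (x - y) := by
  obtain ⟨C₁, hC₁, conv₁⟩ :=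
    exists_sum_decay_mul_decay_le_of_lt (d := d) (a := d - 2) (b := d - 2) (by omega) (by omega)
      (by omega)
  obtain ⟨C₂, hC₂, conv₂⟩ :=
    exists_sum_decay_mul_decay_le_of_gt (d := d) (a := 2 * d - 6) (b := d - 2) (by omega) (by omega)
  refine ⟨C₁ * C₂, by positivity, fun x y s₁ s₂ => ?_⟩
  calc _ = ∑ z₁ ∈ s₁, decay (d - 2) (z₁ - x) * decay (d - 2) (z₁ - y) *
          ∑ z₂ ∈ s₂, decay (d - 2) (z₂ - z₁) * decay (d - 2) (z₂ - x) := by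
        refine sum_congr rfl fun z₁ _ => ?_
        rw [mul_sum]
        refine sum_congr rfl fun z₂ _ => ?_
        rw [decay_sub_comm _ x, decay_sub_comm _ z₁ z₂]
        ring
    _ ≤ ∑ z₁ ∈ s₁, decay (d - 2) (z₁ - x) * decay (d - 2) (z₁ - y) *
          (C₁ * decay (d - 2 + (d - 2) - d) (z₁ - x)) :=
        sum_le_sum fun z₁ _ => mul_le_mul_of_nonneg_left (conv₁ z₁ x s₂)
          (mul_nonneg (decay_nonneg _ _) (decay_nonneg _ _))
    _ = C₁ * ∑ z₁ ∈ s₁, decay (2 * d - 6) (z₁ - x) * decay (d - 2) (z₁ - y) := by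
        rw [mul_sum]
        refine sum_congr rfl fun z₁ _ => ?_
        rw [← (by omega : d - 2 + (d - 2 + (d - 2) - d) = 2 * d - 6), ← decay_mul_decay]
        ring
    _ ≤ C₁ * (C₂ * decay (d - 2) (x - y)) := by gcongr; exact conv₂ x y s₁
    _ = C₁ * C₂ * decay (d - 2) (x - y) := by ring

end LatticeConvolution

open LatticeConvolution

/-- For `d > 6` there is `C = C(d) > 0` such that for all `x, y ∈ ℤ^d`,
`∑_{z₁,z₂ ∈ ℤ^d} |x-z₁|^{2-d}|z₁-z₂|^{2-d}|z₂-x|^{2-d}|z₁-y|^{2-d} ≤ C |x-y|^{2-d}`. -/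
theorem double_convolution (d : ℕ) (hd : 6 < d) :
    ∃ C : ℝ, 0 < C ∧ ∀ x y : Fin d → ℤ,
      (∑' z : (Fin d → ℤ) × (Fin d → ℤ),
          ipow (x - z.1) ((d : ℝ) - 2) * ipow (z.1 - z.2) ((d : ℝ) - 2) *
            ipow (z.2 - x) ((d : ℝ) - 2) * ipow (z.1 - y) ((d : ℝ) - 2)) ≤
        C * ipow (x - y) ((d : ℝ) - 2) := by
  obtain ⟨C, hC, hsum⟩ := exists_double_sum_le hd
  refine ⟨C, hC, fun x y => ?_⟩
  have hipow (w : Fin d → ℤ) : ipow w ((d : ℝ) - 2) = decay (d - 2) w := by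
    rw [← ipow_natCast, Nat.cast_sub (by omega), Nat.cast_ofNat]
  simp only [hipow]
  refine tsum_le_of_sum_le' (mul_nonneg hC.le (decay_nonneg _ _)) fun s => ?_
  refine (Finset.sum_le_sum_of_subset_of_nonneg Finset.subset_product fun _ _ _ => ?_).trans ?_
  · simp only [decay]
    positivity
  · rw [Finset.sum_product]
    exact hsum x y _ _
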